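/- For any basic instruction a and natural numbers k ≥ 0, the thread extracted from the closed PGA term (#(k+2);#(k+1);u₁;⋯;uₖ;+a)^ω equals the thread extracted from (a;#(k+1);u₁;⋯;uₖ;a)^ω, where u₁,…,uₖ are arbitrary primitive instructions (this is the content of axiom PGA27, and its soundness for behavioural equivalence). -/

import Mathlib

/-- Primitive instructions over a set `A` of basic instructions. -/
inductive PInstr (A : Type) where
  | basic : A → PInstr A
  | ptst : A → PInstr A
  | ntst : A → PInstr A
  | jmp : ℕ → PInstr A
  | halt : PInstr A

open PInstr

/-- Closed PGA instruction-sequence terms: primitive instruction constants,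
concatenation `;`, and repetition `^ω`. -/
inductive ISTm (A : Type) where
  | ins : PInstr A → ISTm A
  | seq : ISTm A → ISTm A → ISTm A
  | rep : ISTm A → ISTm A

/-- `pw t n` is `t^{n+1}`: `t^1 = t`, `t^{n+1} = t ; t^n`. -/
def ISTm.pw {A : Type} (t : ISTm A) : ℕ → ISTm A
  | 0 => t
  | n + 1 => .seq t (t.pw n)

/-- `cat us t` is the term `u₁ ; ⋯ ; uₖ ; t` (right-associated). -/
def ISTm.cat {A : Type} : List (PInstr A) → ISTm A → ISTm A
  | [], t => t
  | u :: us, t => .seq (.ins u) (ISTm.cat us t)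

/-- `nel u us` is the right-associated term of the non-empty instruction
list `u :: us`. -/
def ISTm.nel {A : Type} : PInstr A → List (PInstr A) → ISTm A
  | u, [] => .ins u
  | u, v :: vs => .seq (.ins u) (ISTm.nel v vs)

/-- Equational derivability from the structural congruence axioms
PGA1–PGA8. -/
inductive EqI {A : Type} : ISTm A → ISTm A → Prop where
  | refl (t) : EqI t t
  | symm {t t'} : EqI t t' → EqI t' t
  | trans {t t' t''} : EqI t t' → EqI t' t'' → EqI t t''
  | seqCongr {s s' t t'} : EqI s s' → EqI t t' → EqI (.seq s t) (.seq s' t')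
  | repCongr {t t'} : EqI t t' → EqI (.rep t) (.rep t')
  | pga1 (x y z) : EqI (.seq (.seq x y) z) (.seq x (.seq y z))
  | pga2 (x) (n : ℕ) : EqI (.rep (x.pw n)) (.rep x)
  | pga3 (x y) : EqI (.seq (.rep x) y) (.rep x)
  | pga4 (x y) : EqI (.rep (.seq x y)) (.seq x (.rep (.seq y x)))
  | pga5 (us : List (PInstr A)) :
      EqI (.cat (jmp (us.length + 1) :: us) (.ins (jmp 0)))
        (.cat (jmp 0 :: us) (.ins (jmp 0)))
  | pga6 (us : List (PInstr A)) (l : ℕ) :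
      EqI (.cat (jmp (us.length + 1) :: us) (.ins (jmp l)))
        (.cat (jmp (l + us.length + 1) :: us) (.ins (jmp l)))
  | pga7 (us : List (PInstr A)) (l : ℕ) :
      EqI (.rep (.nel (jmp (l + us.length + 1)) us))
        (.rep (.nel (jmp l) us))
  | pga8 (us : List (PInstr A)) (v : PInstr A) (vs : List (PInstr A)) (l : ℕ) :
      EqI (.cat (jmp (l + us.length + vs.length + 2) :: us) (.rep (.nel v vs)))
        (.cat (jmp (l + us.length + 1) :: us) (.rep (.nel v vs)))

/-- Thread terms of the combination of PGA with BTA with projections: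
inaction `D`, termination `S`, postconditional composition, projections,
and thread extraction applied to instruction-sequence terms. -/
inductive TT (A : Type) where
  | D : TT A
  | S : TT A
  | pcc : TT A → A → TT A → TT A
  | proj : ℕ → TT A → TT A
  | extr : ISTm A → TT A

/-- Derivable equality of thread terms from TE1–TE13, PR1–PR4, AIP, and
the structural congruence axioms PGA1–PGA8 (lifted through thread
extraction). -/
inductive EqT {A : Type} : TT A → TT A → Prop where
  | refl (x) : EqT x x
  | symm {x y} : EqT x y → EqT y x
  | trans {x y z} : EqT x y → EqT y z → EqT x z
  | pccCongr {x x' y y'} (a : A) : EqT x x' → EqT y y' →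
      EqT (.pcc x a y) (.pcc x' a y')
  | projCongr (n : ℕ) {x y} : EqT x y → EqT (.proj n x) (.proj n y)
  | extrCongr {t t' : ISTm A} : EqI t t' → EqT (.extr t) (.extr t')
  | te1 (a : A) : EqT (.extr (.ins (basic a))) (.pcc .D a .D)
  | te2 (a : A) (X : ISTm A) :
      EqT (.extr (.seq (.ins (basic a)) X)) (.pcc (.extr X) a (.extr X))
  | te3 (a : A) : EqT (.extr (.ins (ptst a))) (.pcc .D a .D)
  | te4 (a : A) (X : ISTm A) :
      EqT (.extr (.seq (.ins (ptst a)) X))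
        (.pcc (.extr X) a (.extr (.seq (.ins (jmp 2)) X)))
  | te5 (a : A) : EqT (.extr (.ins (ntst a))) (.pcc .D a .D)
  | te6 (a : A) (X : ISTm A) :
      EqT (.extr (.seq (.ins (ntst a)) X))
        (.pcc (.extr (.seq (.ins (jmp 2)) X)) a (.extr X))
  | te7 (l : ℕ) : EqT (.extr (.ins (jmp l) : ISTm A)) .D
  | te8 (X : ISTm A) : EqT (.extr (.seq (.ins (jmp 0)) X)) .D
  | te9 (X : ISTm A) : EqT (.extr (.seq (.ins (jmp 1)) X)) (.extr X)
  | te10 (l : ℕ) (u : PInstr A) :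
      EqT (.extr (.seq (.ins (jmp (l + 2))) (.ins u))) .D
  | te11 (l : ℕ) (u : PInstr A) (X : ISTm A) :
      EqT (.extr (.seq (.ins (jmp (l + 2))) (.seq (.ins u) X)))
        (.extr (.seq (.ins (jmp (l + 1))) X))
  | te12 : EqT (.extr (.ins (halt : PInstr A))) .S
  | te13 (X : ISTm A) : EqT (.extr (.seq (.ins halt) X)) .S
  | pr1 (x : TT A) : EqT (.proj 0 x) .D
  | pr2 (n : ℕ) : EqT (.proj (n + 1) (.D : TT A)) .D
  | pr3 (n : ℕ) : EqT (.proj (n + 1) (.S : TT A)) .S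
  | pr4 (n : ℕ) (x y : TT A) (a : A) :
      EqT (.proj (n + 1) (.pcc x a y)) (.pcc (.proj n x) a (.proj n y))
  | aip {x y : TT A} : (∀ n : ℕ, EqT (.proj n x) (.proj n y)) → EqT x y

/-- `halts n` is `!^{n+1}`. -/
def halts {A : Type} : ℕ → ISTm A
  | 0 => .ins halt
  | n + 1 => .seq (.ins halt) (halts n)

/-- `appHalts t n` is `t ; !ⁿ`, with `t ; !⁰ = t`. -/
def appHalts {A : Type} (t : ISTm A) : ℕ → ISTm A
  | 0 => t
  | n + 1 => .seq t (halts n)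

/-- Behavioural equivalence: the threads extracted from the two terms are
derivably equal. -/
def BEqv {A : Type} (t t' : ISTm A) : Prop := EqT (.extr t) (.extr t')

/-- Behavioural congruence: `t ≅ t'` iff for all `l, n ∈ ℕ`,
`#l ; t ; !ⁿ ≈ #l ; t' ; !ⁿ`. -/
def BCong {A : Type} (t t' : ISTm A) : Prop :=
  ∀ l n : ℕ, BEqv (.seq (.ins (jmp l)) (appHalts t n))
    (.seq (.ins (jmp l)) (appHalts t' n))

/-!
Both loops only ever perform `a`. On the left, `#(k+2)` jumps onto `#(k+1)`, which skips
`u₁;⋯;uₖ` and lands on `+a`; whichever way the test goes, control is back at `+a` (directly,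
or through `#2`, which skips the next `#(k+2)`). On the right the two occurrences of `a`
alternate, `#(k+1)` again skipping the `uᵢ`. By AIP the two threads are equal, because any
family of threads each of which is `y ⊴ a ⊵ y` for some `y` in the family has the
same `n`-th projection throughout: `n` nested `a`-steps ending in `D`.
-/

theorem ISTm.cat_append_singleton {A : Type} (us : List (PInstr A)) (v : PInstr A)
    (x : ISTm A) : ISTm.cat (us ++ [v]) x = ISTm.cat us (.seq (.ins v) x) := by
  induction us with
  | nil => rfl
  | cons u us ih => simp only [List.cons_append, ISTm.cat, ih]

namespace EqI

variable {A : Type}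

theorem rep_unfold (x : ISTm A) : EqI (.rep x) (.seq x (.rep x)) :=
  (pga2 x 1).symm.trans ((pga4 x x).trans (seqCongr (refl x) (pga2 x 1)))

theorem nel_seq (u : PInstr A) (us : List (PInstr A)) (x : ISTm A) :
    EqI (.seq (.nel u us) x) (.seq (.ins u) (.cat us x)) := by
  induction us generalizing u with
  | nil => exact refl _
  | cons v vs ih => exact (pga1 _ _ _).trans (seqCongr (refl _) (ih v))

theorem rep_nel_unfold (u : PInstr A) (us : List (PInstr A)) :
    EqI (.rep (.nel u us)) (.seq (.ins u) (.cat us (.rep (.nel u us)))) :=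
  (rep_unfold _).trans (nel_seq u us _)

theorem rep_nel_cons_append_unfold (u w v : PInstr A) (us : List (PInstr A)) :
    EqI (.rep (.nel u (w :: us ++ [v])))
      (.seq (.ins u) (.seq (.ins w) (.cat us (.seq (.ins v) (.rep (.nel u (w :: us ++ [v]))))))) :=
  ISTm.cat_append_singleton us v _ ▸ rep_nel_unfold u (w :: us ++ [v])

end EqI

/-- `π n` of the thread that performs `a` forever. -/
def TT.iterate {A : Type} (a : A) : ℕ → TT A
  | 0 => .D
  | n + 1 => .pcc (TT.iterate a n) a (TT.iterate a n)

namespace EqT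

variable {A : Type}

instance : @Trans (TT A) (TT A) (TT A) EqT EqT EqT := ⟨EqT.trans⟩

theorem extr_jmp_cat (us : List (PInstr A)) (x : ISTm A) :
    EqT (.extr (.seq (.ins (jmp (us.length + 1))) (.cat us x))) (.extr x) := by
  induction us with
  | nil => exact te9 x
  | cons u us ih => exact (te11 us.length u _).trans ih

theorem extr_jmp_two (u : PInstr A) (x : ISTm A) :
    EqT (.extr (.seq (.ins (jmp 2)) (.seq (.ins u) x))) (.extr x) :=
  (te11 0 u x).trans (te9 x)

theorem proj_eq_iterate {a : A} {S : TT A → Prop}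
    (hS : ∀ x, S x → ∃ y, S y ∧ EqT x (.pcc y a y)) (n : ℕ) :
    ∀ x, S x → EqT (.proj n x) (TT.iterate a n) := by
  induction n with
  | zero => exact fun x _ => pr1 x
  | succ n ih =>
    intro x hx
    obtain ⟨y, hy, hxy⟩ := hS x hx
    calc EqT (.proj (n + 1) x) (.proj (n + 1) (.pcc y a y)) := projCongr _ hxy
      EqT _ (.pcc (.proj n y) a (.proj n y)) := pr4 n y y a
      EqT _ (TT.iterate a (n + 1)) := pccCongr a (ih y hy) (ih y hy)

theorem of_forall_eqT_pcc {a : A} {S : TT A → Prop}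
    (hS : ∀ x, S x → ∃ y, S y ∧ EqT x (.pcc y a y)) {x y : TT A} (hx : S x) (hy : S y) :
    EqT x y :=
  aip fun n => (proj_eq_iterate hS n x hx).trans (proj_eq_iterate hS n y hy).symm

end EqT

/-- Soundness of axiom PGA27 for behavioural equivalence: the thread
extracted from `(#(k+2);#(k+1);u₁;⋯;uₖ;+a)^ω` equals the thread extracted
from `(a;#(k+1);u₁;⋯;uₖ;a)^ω` (here `k = us.length`). -/
theorem pga27_sound {A : Type} (a : A) (us : List (PInstr A)) :
    BEqv
      (.rep (.nel (jmp (us.length + 2)) (jmp (us.length + 1) :: us ++ [ptst a])))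
      (.rep (.nel (basic a) (jmp (us.length + 1) :: us ++ [basic a]))) := by
  set k := us.length
  set X : ISTm A := .rep (.nel (jmp (k + 2)) (jmp (k + 1) :: us ++ [ptst a]))
  set Y : ISTm A := .rep (.nel (basic a) (jmp (k + 1) :: us ++ [basic a]))
  have hX : EqI X (.seq (.ins (jmp (k + 2)))
      (.seq (.ins (jmp (k + 1))) (.cat us (.seq (.ins (ptst a)) X)))) :=
    EqI.rep_nel_cons_append_unfold _ _ _ _
  have hY : EqI Y (.seq (.ins (basic a))
      (.seq (.ins (jmp (k + 1))) (.cat us (.seq (.ins (basic a)) Y)))) :=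
    EqI.rep_nel_cons_append_unfold _ _ _ _
  set T : TT A := .extr (.seq (.ins (ptst a)) X)
  set R : TT A := .extr (.seq (.ins (basic a)) Y)
  have hXT : EqT (.extr X) T :=
    (EqT.extrCongr hX).trans ((EqT.te11 k _ _).trans (EqT.extr_jmp_cat _ _))
  have hT : EqT T (.pcc T a T) :=
    (EqT.te4 a X).trans <| EqT.pccCongr a hXT <|
      (EqT.extrCongr (EqI.seqCongr (EqI.refl _) hX)).trans
        ((EqT.extr_jmp_two _ _).trans (EqT.extr_jmp_cat _ _))
  have hYR : EqT (.extr Y) (.pcc R a R) :=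
    (EqT.extrCongr hY).trans <| (EqT.te2 a _).trans <|
      EqT.pccCongr a (EqT.extr_jmp_cat _ _) (EqT.extr_jmp_cat _ _)
  refine hXT.trans (EqT.of_forall_eqT_pcc (a := a) (S := fun x => x = T ∨ x = .extr Y ∨ x = R)
    ?_ (.inl rfl) (.inr (.inl rfl)))
  rintro x (rfl | rfl | rfl)
  exacts [⟨_, .inl rfl, hT⟩, ⟨_, .inr (.inr rfl), hYR⟩,
    ⟨_, .inr (.inl rfl), EqT.te2 a Y⟩]
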